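/- arXiv:2010.05052 — 5 statements merged into one kernel-verified Lean document; each statement's English description precedes it below -/
import Mathlib

section
/- If 3/2 = p·a + q·(1 - a) + r, where a is a real number with 0 < a < 1/2 and a ≠ 1/4, and p, q, r are non-negative integers, then p > q and a = 3/(2s) for some positive integer s. -/
theorem stmt_0 (a : ℝ) (p q r : ℕ)
    (ha0 : 0 < a) (ha1 : a < 1/2) (ha2 : a ≠ 1/4)
    (heq : (3:ℝ)/2 = p * a + q * (1 - a) + r) :
    p > q ∧ ∃ s : ℕ, 0 < s ∧ a = 3 / (2 * s) := by
  have hpn : (0:ℝ) ≤ (p:ℝ) := Nat.cast_nonneg p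
  have hqn : (0:ℝ) ≤ (q:ℝ) := Nat.cast_nonneg q
  have hrn : (0:ℝ) ≤ (r:ℝ) := Nat.cast_nonneg r
  have hpa : (0:ℝ) ≤ p * a := mul_nonneg hpn ha0.le
  have hqa : (0:ℝ) ≤ q * (1 - a) := mul_nonneg hqn (by linarith)
  have hq2 : q ≤ 2 := by
    by_contra h
    push_neg at h
    have h3 : (3:ℝ) ≤ q := by exact_mod_cast h
    have : (3:ℝ) * (1 - a) ≤ q * (1 - a) :=
      mul_le_mul_of_nonneg_right h3 (by linarith)
    linarith
  have hr1 : r ≤ 1 := by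
    by_contra h
    push_neg at h
    have h2 : (2:ℝ) ≤ r := by exact_mod_cast h
    linarith
  interval_cases q <;> interval_cases r <;> push_cast at heq
  · -- q=0, r=0 : p*a = 3/2
    have hp : 1 ≤ p := by
      rcases Nat.eq_zero_or_pos p with h | h
      · subst h; norm_num at heq
      · exact h
    refine ⟨hp, p, hp, ?_⟩
    have hpR : (0:ℝ) < p := by exact_mod_cast hp
    field_simp
    linarith
  · -- q=0, r=1 : p*a = 1/2
    have hp : 1 ≤ p := by
      rcases Nat.eq_zero_or_pos p with h | h
      · subst h; norm_num at heq
      · exact h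
    refine ⟨hp, 3 * p, by omega, ?_⟩
    have hpR : (0:ℝ) < p := by exact_mod_cast hp
    push_cast
    field_simp
    linarith
  · -- q=1, r=0 : (p-1)*a = 1/2
    have hp : 2 ≤ p := by
      rcases p with _ | _ | p
      · exfalso; push_cast at heq; linarith
      · exfalso; push_cast at heq; linarith
      · omega
    refine ⟨by omega, 3 * (p - 1), by omega, ?_⟩
    have hpR : (1:ℝ) < p := by exact_mod_cast hp
    have : ((3 * (p - 1) : ℕ) : ℝ) = 3 * ((p:ℝ) - 1) := by
      push_cast [Nat.cast_sub (by omega : 1 ≤ p)]; ring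
    rw [this]
    rw [eq_div_iff (by nlinarith : (2:ℝ) * (3 * ((p:ℝ) - 1)) ≠ 0)]
    nlinarith
  · -- q=1, r=1 : impossible
    exfalso
    rcases Nat.eq_zero_or_pos p with h | h
    · subst h; push_cast at heq; linarith
    · have : (1:ℝ) ≤ p := by exact_mod_cast h
      nlinarith
  · -- q=2, r=0 : impossible (a=1/4 or a=1/2 or neg)
    exfalso
    rcases p with _ | _ | p
    · push_cast at heq; apply ha2; linarith
    · push_cast at heq; linarith
    · have : (2:ℝ) ≤ (p+2:ℕ) := by push_cast; linarith
      nlinarith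
  · -- q=2, r=1 : impossible
    exfalso
    nlinarith
end

section
/- If 4 = p·a + q·(1 - a) + r, where a is a real number with 0 < a < 1/2 and a ∉ {1/4, 1/5, 2/5, 3/7, 1/3}, and p, q, r are non-negative integers, then p ≥ q. -/
set_option maxHeartbeats 2000000 in
theorem stmt_1 (a : ℝ) (p q r : ℕ)
    (ha0 : 0 < a) (ha1 : a < 1/2)
    (ha2 : a ∉ ({1/4, 1/5, 2/5, 3/7, 1/3} : Set ℝ))
    (heq : (4:ℝ) = p * a + q * (1 - a) + r) :
    p ≥ q := by
  by_contra hlt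
  push_neg at hlt
  simp only [Set.mem_insert_iff, Set.mem_singleton_iff, not_or] at ha2
  obtain ⟨h1, h2, h3, h4, h5⟩ := ha2
  have hp0 : (0:ℝ) ≤ p := Nat.cast_nonneg p
  have hr0 : (0:ℝ) ≤ r := Nat.cast_nonneg r
  have hq : q ≤ 7 := by
    by_contra h; push_neg at h
    have h8 : (8:ℝ) ≤ q := by exact_mod_cast h
    nlinarith [mul_nonneg hp0 ha0.le]
  have hr : r ≤ 4 := by
    by_contra h; push_neg at h
    have h5' : (5:ℝ) ≤ r := by exact_mod_cast h
    nlinarith [mul_nonneg hp0 ha0.le, mul_nonneg (Nat.cast_nonneg q : (0:ℝ) ≤ q) (by linarith : (0:ℝ) ≤ 1 - a)]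
  interval_cases q <;> interval_cases p <;> interval_cases r <;>
    push_cast at heq <;>
    first
      | linarith
      | (rcases lt_or_gt_of_ne h1 with h | h <;> linarith)
      | (rcases lt_or_gt_of_ne h2 with h | h <;> linarith)
      | (rcases lt_or_gt_of_ne h3 with h | h <;> linarith)
      | (rcases lt_or_gt_of_ne h4 with h | h <;> linarith)
      | (rcases lt_or_gt_of_ne h5 with h | h <;> linarith)
end

section
/- For any integer n ≥ 5: if 2 - 4/n = p·a + q·(1 - a) + r, where a is a real number with 0 < a ≤ 1/2 and a ∉ {2/n, 4/n, 1/3 + 4/(3n)}, and p, q, r are non-negative integers, then p > q and a = (2 - 4/n)/s or a = (1 - 4/n)/s for some positive integer s. -/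
set_option maxHeartbeats 1600000 in
theorem stmt_3 (n : ℤ) (hn : 5 ≤ n) (a : ℝ) (p q r : ℕ)
    (ha0 : 0 < a) (ha1 : a ≤ 1/2)
    (ha2 : a ∉ ({2/(n:ℝ), 4/(n:ℝ), 1/3 + 4/(3*(n:ℝ))} : Set ℝ))
    (heq : 2 - 4/(n:ℝ) = p * a + q * (1 - a) + r) :
    p > q ∧ ∃ s : ℕ, 0 < s ∧ (a = (2 - 4/(n:ℝ))/s ∨ a = (1 - 4/(n:ℝ))/s) := by
  have hn5 : (5:ℝ) ≤ (n:ℝ) := by exact_mod_cast hn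
  have hnpos : (0:ℝ) < (n:ℝ) := by linarith
  have hne : (n:ℝ) ≠ 0 := ne_of_gt hnpos
  have h4pos : 0 < 4/(n:ℝ) := by positivity
  have h4le : 4/(n:ℝ) ≤ 4/5 := by
    rw [div_le_div_iff₀ hnpos (by norm_num)]; linarith
  simp only [Set.mem_insert_iff, Set.mem_singleton_iff, not_or] at ha2
  obtain ⟨h2n, h4n, h13n⟩ := ha2
  have heq' : (2:ℝ) - 4/n = (p:ℝ)*a + (q:ℝ) - (q:ℝ)*a + r := by rw [heq]; ring
  have hpq : p > q := by
    by_contra h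
    push_neg at h
    rcases eq_or_lt_of_le h with heqpq | hlt
    · -- p = q
      have key : (2:ℝ) - 4/n = (q:ℝ) + r := by rw [heq', heqpq]; ring
      have h1 : (1:ℝ) < ((q + r : ℕ):ℝ) := by push_cast; linarith
      have h2 : ((q + r : ℕ):ℝ) < 2 := by push_cast; linarith
      have h1' : 1 < q + r := by exact_mod_cast h1
      have h2' : q + r < 2 := by exact_mod_cast h2
      omega
    · -- p < q
      have hqp : (0:ℝ) < (q:ℝ) - p := by
        have : (p:ℝ) < q := by exact_mod_cast hlt
        linarith
      have hmul : ((q:ℝ) - p) * a ≤ ((q:ℝ) - p) * (1/2) :=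
        mul_le_mul_of_nonneg_left ha1 hqp.le
      have hring : ((q:ℝ) - p) * a = (q:ℝ)*a - (p:ℝ)*a := by ring
      have hring2 : ((q:ℝ) - p) * (1/2) = (q:ℝ)/2 - (p:ℝ)/2 := by ring
      -- q + r - (2 - 4/n) ≤ (q-p)/2
      have hbound : ((p + q + 2*r : ℕ):ℝ) < 4 := by push_cast; linarith
      have hbound' : p + q + 2*r ≤ 3 := by
        have : ((p + q + 2*r : ℕ):ℝ) < ((4:ℕ):ℝ) := by exact_mod_cast hbound
        have := Nat.cast_lt.mp this
        omega
      have hcases : (p = 0 ∧ q = 1 ∧ r = 0) ∨ (p = 0 ∧ q = 2 ∧ r = 0) ∨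
          (p = 0 ∧ q = 1 ∧ r = 1) ∨ (p = 0 ∧ q = 3 ∧ r = 0) ∨
          (p = 1 ∧ q = 2 ∧ r = 0) := by omega
      rcases hcases with ⟨hp, hq, hr⟩ | ⟨hp, hq, hr⟩ | ⟨hp, hq, hr⟩ | ⟨hp, hq, hr⟩ |
        ⟨hp, hq, hr⟩ <;> subst hp <;> subst hq <;> subst hr <;> push_cast at heq'
      · linarith
      · exact h2n (by rw [eq_div_iff hne]; nlinarith [div_mul_cancel₀ (4:ℝ) hne])
      · exact h4n (by rw [eq_div_iff hne]; nlinarith [div_mul_cancel₀ (4:ℝ) hne])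
      · exact h13n (by
          have h3 : (3:ℝ) * (n:ℝ) ≠ 0 := by positivity
          field_simp
          nlinarith [div_mul_cancel₀ (4:ℝ) hne])
      · exact h4n (by rw [eq_div_iff hne]; nlinarith [div_mul_cancel₀ (4:ℝ) hne])
  have hppos : (0:ℝ) < (p:ℝ) - q := by
    have : (q:ℝ) < p := by exact_mod_cast hpq
    linarith
  have hqr : q + r ≤ 1 := by
    by_contra h
    push_neg at h
    have h2 : (2:ℝ) ≤ (q:ℝ) + r := by exact_mod_cast h
    nlinarith [mul_pos hppos ha0]
  refine ⟨hpq, p - q, by omega, ?_⟩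
  have hs : ((p - q : ℕ):ℝ) = (p:ℝ) - q := by
    push_cast [Nat.cast_sub hpq.le]; ring
  rcases (show (q = 0 ∧ r = 0) ∨ (q = 0 ∧ r = 1) ∨ (q = 1 ∧ r = 0) by omega) with
    ⟨hq, hr⟩ | ⟨hq, hr⟩ | ⟨hq, hr⟩ <;> subst hq <;> subst hr <;>
    push_cast at heq'
  · left
    have hp0 : ((p:ℝ) - ((0:ℕ):ℝ)) ≠ 0 := by
      have : (0:ℝ) < (p:ℝ) := by exact_mod_cast hpq
      push_cast; linarith
    rw [hs, eq_div_iff hp0]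
    push_cast; nlinarith
  · right
    have hp0 : ((p:ℝ) - ((0:ℕ):ℝ)) ≠ 0 := by
      have : (0:ℝ) < (p:ℝ) := by exact_mod_cast hpq
      push_cast; linarith
    rw [hs, eq_div_iff hp0]
    push_cast; nlinarith
  · right
    have hp1 : ((p:ℝ) - ((1:ℕ):ℝ)) ≠ 0 := by
      have : (1:ℝ) < (p:ℝ) := by exact_mod_cast hpq
      push_cast; linarith
    rw [hs, eq_div_iff hp1]
    push_cast; nlinarith
end

section
/- For any integer n ≥ 5 with n ≠ 28: if a ∈ {1/4, 1/5, 2/5, 3/7, 1/3} and a = (2 - 4/n)/s or a = (1 - 4/n)/s for some positive integer s, then either a or 1 - a belongs to {2/n, 4/n, 1/3 + 4/(3n)}. -/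
/-! Writing `a = p / q`, `a * s = c - 4 / n` with `c ∈ {1, 2}` gives
`n * (c * q - p * s) = 4 * q`, so `n ∣ 4 * q`. Only the divisors `n ≥ 5` of `16, 20, 28, 12`
remain, and each pair `(a, n)` is checked directly; `(3/7, 28)` is the one that fails. -/

theorem dvd_mul_of_div_eq_sub_div_div {p q c m n s : ℤ} (hq : q ≠ 0) (hn : n ≠ 0) (hs : s ≠ 0)
    (h : (p / q : ℝ) = (c - m / n) / s) : n ∣ m * q := by
  have hℝ : (p * s * n : ℝ) = q * (c * n - m) := by
    field_simp at h
    linear_combination h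
  have hℤ : p * s * n = q * (c * n - m) := by exact_mod_cast hℝ
  exact ⟨q * c - p * s, by linear_combination hℤ⟩

theorem stmt_4 (n : ℤ) (hn : 5 ≤ n) (hn28 : n ≠ 28) (a : ℝ)
    (ha : a ∈ ({1/4, 1/5, 2/5, 3/7, 1/3} : Set ℝ))
    (hs : ∃ s : ℕ, 0 < s ∧ (a = (2 - 4/(n:ℝ))/s ∨ a = (1 - 4/(n:ℝ))/s)) :
    a ∈ ({2/(n:ℝ), 4/(n:ℝ), 1/3 + 4/(3*(n:ℝ))} : Set ℝ) ∨
    1 - a ∈ ({2/(n:ℝ), 4/(n:ℝ), 1/3 + 4/(3*(n:ℝ))} : Set ℝ) := by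
  obtain ⟨s, hs, hsa⟩ := hs
  obtain ⟨c, hc⟩ : ∃ c : ℤ, a = (c - 4 / n) / s := by
    rcases hsa with h | h
    exacts [⟨2, mod_cast h⟩, ⟨1, mod_cast h⟩]
  have hdvd (p q : ℤ) (hq : 0 < q) (ha : a = p / q) : n ∣ 4 * q ∧ n ≤ 4 * q := by
    have hd := dvd_mul_of_div_eq_sub_div_div (n := n) (s := s) hq.ne' (by omega)
      (by exact_mod_cast hs.ne') (by rw [← ha, hc]; push_cast; rfl)
    exact ⟨hd, Int.le_of_dvd (by omega) hd⟩
  simp only [Set.mem_insert_iff, Set.mem_singleton_iff] at ha ⊢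
  rcases ha with rfl | rfl | rfl | rfl | rfl
  · obtain ⟨hd, hle⟩ := hdvd 1 4 (by norm_num) (by norm_num)
    interval_cases n <;> first | omega | norm_num
  · obtain ⟨hd, hle⟩ := hdvd 1 5 (by norm_num) (by norm_num)
    interval_cases n <;> first | omega | norm_num
  · obtain ⟨hd, hle⟩ := hdvd 2 5 (by norm_num) (by norm_num)
    interval_cases n <;> first | omega | norm_num
  · obtain ⟨hd, hle⟩ := hdvd 3 7 (by norm_num) (by norm_num)
    interval_cases n <;> first | omega | norm_num
  · obtain ⟨hd, hle⟩ := hdvd 1 3 (by norm_num) (by norm_num)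
    interval_cases n <;> first | omega | norm_num
end

section
/- For any integer n ≥ 5 with n ≠ 28: if a = 3/7 and a = (2 - 4/n)/s or a = (1 - 4/n)/s for some positive integer s, then either a or 1 - a belongs to {2/n, 4/n, 1/3 + 4/(3n)}. -/
theorem stmt_8 (n : ℤ) (hn : 5 ≤ n) (hn28 : n ≠ 28) (a : ℝ) (ha : a = 3/7)
    (hs : ∃ s : ℕ, 0 < s ∧ (a = (2 - 4/(n:ℝ))/s ∨ a = (1 - 4/(n:ℝ))/s)) :
    a ∈ ({2/(n:ℝ), 4/(n:ℝ), 1/3 + 4/(3*(n:ℝ))} : Set ℝ) ∨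
    1 - a ∈ ({2/(n:ℝ), 4/(n:ℝ), 1/3 + 4/(3*(n:ℝ))} : Set ℝ) := by
  obtain ⟨s, hs0, h | h⟩ := hs
  · have hnR : (n:ℝ) ≠ 0 := by positivity
    have hsR : (s:ℝ) ≠ 0 := Nat.cast_ne_zero.mpr hs0.ne'
    rw [ha] at h
    have hreal : (n:ℝ) * (14 - 3*(s:ℕ)) = 28 := by
      field_simp at h; nlinarith [h]
    have hkey : n * (14 - 3*(s:ℤ)) = 28 := by exact_mod_cast hreal
    have hsle : s ≤ 4 := by nlinarith [hkey, hn, (Nat.cast_pos.mpr hs0 : (0:ℤ) < s)]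
    interval_cases s <;> norm_num at hkey
    · omega
    · omega
    · omega
    · -- s = 4, n = 14
      have hn14 : n = 14 := by omega
      subst hn14 ha
      left
      right; right
      norm_num
  · have hnR : (n:ℝ) ≠ 0 := by positivity
    have hsR : (s:ℝ) ≠ 0 := Nat.cast_ne_zero.mpr hs0.ne'
    rw [ha] at h
    have hreal : (n:ℝ) * (7 - 3*(s:ℕ)) = 28 := by
      field_simp at h; nlinarith [h]
    have hkey : n * (7 - 3*(s:ℤ)) = 28 := by exact_mod_cast hreal
    have hsle : s ≤ 2 := by nlinarith [hkey, hn, (Nat.cast_pos.mpr hs0 : (0:ℤ) < s)]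
    interval_cases s <;> norm_num at hkey
    · -- s = 1, n = 7
      have hn7 : n = 7 := by omega
      subst hn7 ha
      right
      right; left
      norm_num
    · omega
end
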